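/- arXiv:2501.07265 — 3 statements merged into one kernel-verified Lean document; each statement's English description precedes it below -/
import Mathlib

section
/- Suppose for each price vector p in a set P ⊆ ℝ^K_{≥0}, each buyer n's demand x*_n(p) ∈ ℝ^K_{≥0} satisfies: there exist slack variables ξ_{nk}(p) ≥ 0 with F_{nk}(x*(p)) + ξ_{nk}(p) = p_k and ξ_{nk}(p) x*_{nk}(p) = 0 for all n, k, where F : ℝ^{NK} → ℝ^{NK} is strictly monotone (⟨F(x) - F(y), x - y⟩ < 0 for x ≠ y). Then the aggregate excess demand z_k(p) = ∑_n x*_{nk}(p) - 1 is monotone in prices: for all p¹, p² ∈ P, ⟨z(p¹) - z(p²), p¹ - p²⟩ ≤ 0. -/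
/-- If, at each price vector p ∈ P, the buyers' demands x*(p) satisfy the
complementary-slackness system F_{nk}(x*(p)) + ξ_{nk}(p) = p_k, ξ_{nk}(p) ≥ 0,
ξ_{nk}(p)·x*_{nk}(p) = 0, with F strictly monotone, then the aggregate excess demand
z_k(p) = ∑_n x*_{nk}(p) − 1 is monotone in prices. -/
theorem aggregate_excess_demand_monotone
    {N K : ℕ} (P : Set (Fin K → ℝ))
    (hPnn : ∀ p ∈ P, ∀ k, 0 ≤ p k)
    (F : (Fin N → Fin K → ℝ) → (Fin N → Fin K → ℝ))
    (hmono : ∀ x y : Fin N → Fin K → ℝ, x ≠ y →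
      ∑ n, ∑ k, (F x n k - F y n k) * (x n k - y n k) < 0)
    (xstar : (Fin K → ℝ) → (Fin N → Fin K → ℝ))
    (ξ : (Fin K → ℝ) → (Fin N → Fin K → ℝ))
    (hx : ∀ p ∈ P, ∀ n k, 0 ≤ xstar p n k)
    (hξ : ∀ p ∈ P, ∀ n k, 0 ≤ ξ p n k)
    (hstat : ∀ p ∈ P, ∀ n k, F (xstar p) n k + ξ p n k = p k)
    (hcs : ∀ p ∈ P, ∀ n k, ξ p n k * xstar p n k = 0) :
    ∀ p₁ ∈ P, ∀ p₂ ∈ P,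
      ∑ k, (((∑ n, xstar p₁ n k) - 1) - ((∑ n, xstar p₂ n k) - 1)) * (p₁ k - p₂ k)
        ≤ 0 := by
  intro p₁ hp₁ p₂ hp₂
  set x₁ := xstar p₁
  set x₂ := xstar p₂
  have e : ∀ n k, (x₁ n k - x₂ n k) * (p₁ k - p₂ k)
      = (F x₁ n k - F x₂ n k) * (x₁ n k - x₂ n k)
        + (ξ p₁ n k - ξ p₂ n k) * (x₁ n k - x₂ n k) := by
    intro n k
    rw [← hstat p₁ hp₁ n k, ← hstat p₂ hp₂ n k]
    ring
  have key : ∑ k, (((∑ n, x₁ n k) - 1) - ((∑ n, x₂ n k) - 1)) * (p₁ k - p₂ k)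
      = (∑ n, ∑ k, (F x₁ n k - F x₂ n k) * (x₁ n k - x₂ n k))
        + ∑ n, ∑ k, (ξ p₁ n k - ξ p₂ n k) * (x₁ n k - x₂ n k) := by
    simp_rw [← Finset.sum_add_distrib]
    rw [Finset.sum_comm]
    refine Finset.sum_congr rfl fun k _ => ?_
    calc (((∑ n, x₁ n k) - 1) - ((∑ n, x₂ n k) - 1)) * (p₁ k - p₂ k)
        = ∑ n, (x₁ n k - x₂ n k) * (p₁ k - p₂ k) := by
          rw [← Finset.sum_mul, Finset.sum_sub_distrib]; ring
      _ = _ := Finset.sum_congr rfl fun n _ => e n k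
  rw [key]
  have h2 : ∑ n, ∑ k, (ξ p₁ n k - ξ p₂ n k) * (x₁ n k - x₂ n k) ≤ 0 := by
    refine Finset.sum_nonpos fun n _ => Finset.sum_nonpos fun k _ => ?_
    have a1 := hcs p₁ hp₁ n k
    have a2 := hcs p₂ hp₂ n k
    nlinarith [hξ p₁ hp₁ n k, hξ p₂ hp₂ n k, hx p₁ hp₁ n k, hx p₂ hp₂ n k,
      mul_nonneg (hξ p₁ hp₁ n k) (hx p₂ hp₂ n k),
      mul_nonneg (hξ p₂ hp₂ n k) (hx p₁ hp₁ n k)]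
  have h1 : ∑ n, ∑ k, (F x₁ n k - F x₂ n k) * (x₁ n k - x₂ n k) ≤ 0 := by
    by_cases hxy : x₁ = x₂
    · simp [hxy]
    · exact le_of_lt (hmono x₁ x₂ hxy)
  linarith
end

section
/- Under trading-post bid dynamics ḃ_{nk} = b_{nk}(F_{nk}(x) − p_k) with p_k = ∑_m b_{mk} and x_{nk} = b_{nk}/p_k, the induced allocation shares satisfy the replicator equation ẋ_{nk} = x_{nk}[F_{nk}(x) − ∑_m F_{mk}(x) x_{mk}], provided p_k > 0. -/
/-!
By the quotient rule, `ẋₙ = (ḃₙ - xₙ ∑ₘ ḃₘ) / p`. For bids growing at relative rates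
`Gₘ - c`, this is `xₙ (Gₙ - c) - xₙ ∑ₘ xₘ (Gₘ - c)`, and the common rate `c` cancels because
the shares `xₘ` sum to one; what is left is the replicator equation.
-/

open Finset

section Shares

variable {ι : Type*} [Fintype ι]

theorem hasDerivAt_share {b : ℝ → ι → ℝ} {b' : ι → ℝ} {s₀ : ℝ}
    (hb : ∀ m, HasDerivAt (fun s => b s m) (b' m) s₀) (hp : ∑ m, b s₀ m ≠ 0) (n : ι) :
    HasDerivAt (fun s => b s n / ∑ m, b s m)
      ((b' n - (b s₀ n / ∑ m, b s₀ m) * ∑ m, b' m) / ∑ m, b s₀ m) s₀ := by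
  refine ((hb n).div (HasDerivAt.fun_sum fun m _ => hb m) hp).congr_deriv ?_
  field_simp

theorem hasDerivAt_share_of_hasDerivAt_eq_mul_sub {b : ℝ → ι → ℝ} {G : ι → ℝ} {c s₀ : ℝ}
    (hb : ∀ m, HasDerivAt (fun s => b s m) (b s₀ m * (G m - c)) s₀)
    (hp : ∑ m, b s₀ m ≠ 0) (n : ι) :
    HasDerivAt (fun s => b s n / ∑ m, b s m)
      ((b s₀ n / ∑ m, b s₀ m) * (G n - ∑ m, G m * (b s₀ m / ∑ m', b s₀ m'))) s₀ := by
  refine (hasDerivAt_share hb hp n).congr_deriv ?_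
  have hrate : ∑ m, b s₀ m * (G m - c) = ∑ m, b s₀ m * G m - (∑ m, b s₀ m) * c := by
    rw [sum_mul, ← sum_sub_distrib]
    simp only [mul_sub]
  have hmean : ∑ m, G m * (b s₀ m / ∑ m', b s₀ m') = (∑ m, b s₀ m * G m) / ∑ m, b s₀ m := by
    rw [sum_div]
    exact sum_congr rfl fun m _ => by ring
  rw [hrate, hmean]
  field_simp
  ring

end Shares

/-- Under trading-post bid dynamics ḃ_{nk} = b_{nk}(F_{nk}(x) − p_k) with
p_k = ∑_m b_{mk} and shares x_{nk} = b_{nk}/p_k, the shares follow the replicator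
equation ẋ_{nk} = x_{nk}[F_{nk}(x) − ∑_m F_{mk}(x) x_{mk}], provided p_k > 0. -/
theorem trading_post_induces_replicator
    {N : ℕ} (b : ℝ → Fin N → ℝ) (F : (Fin N → ℝ) → Fin N → ℝ) (s₀ : ℝ)
    (hbpos : ∀ n, 0 < b s₀ n)
    (hb : ∀ n, HasDerivAt (fun s => b s n)
      (b s₀ n * (F (fun m => b s₀ m / ∑ m', b s₀ m') n - ∑ m', b s₀ m')) s₀) :
    ∀ n, HasDerivAt (fun s => b s n / ∑ m', b s m')
      ((b s₀ n / ∑ m', b s₀ m') *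
        (F (fun m => b s₀ m / ∑ m', b s₀ m') n -
          ∑ m, F (fun m' => b s₀ m' / ∑ m'', b s₀ m'') m *
            (b s₀ m / ∑ m', b s₀ m'))) s₀ := by
  intro n
  have hp : ∑ m, b s₀ m ≠ 0 := (sum_pos (fun m _ => hbpos m) ⟨n, mem_univ n⟩).ne'
  exact hasDerivAt_share_of_hasDerivAt_eq_mul_sub hb hp n
end

section
/- Let G be a game where each player n maximizes a continuous function φ_n(a_n, a_{−n}), concave in a_n, over a feasible set X_n(a_{−n}) = {a_n ∈ A_n : (a_n, a_{−n}) ∈ C} for a shared convex compact set C ⊆ ∏_n A_n. If each φ_n is differentiable and a* ∈ C solves the variational inequality ⟨F(a*), a − a*⟩ ≤ 0 for all a ∈ C, where F(a) = (∇_{a_1}φ_1(a), …, ∇_{a_N}φ_N(a)), then a* is a generalized Nash equilibrium: for every n, φ_n(a*_n, a*_{−n}) ≥ φ_n(a_n, a*_{−n}) for all a_n with (a_n, a*_{−n}) ∈ C. -/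
/-! Fix a player `n` and the opponents' profile `a*₋ₙ`. Moving only `aₙ` keeps every other
coordinate of `a - a*` at zero, so the variational inequality at `a = (aₙ, a*₋ₙ)` collapses to
`⟪∇ₐₙ φₙ(a*), aₙ - a*ₙ⟫ ≤ 0`. Concavity of `φₙ` in its own variable bounds the gain
`φₙ(aₙ, a*₋ₙ) - φₙ(a*)` by that same inner product. -/

open Set

theorem ConcaveOn.sub_le_of_hasFDerivWithinAt {E : Type*} [NormedAddCommGroup E]
    [NormedSpace ℝ E] {s : Set E} {f : E → ℝ} {f' : E →L[ℝ] ℝ} {x y : E}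
    (hf : ConcaveOn ℝ s f) (hx : x ∈ s) (hy : y ∈ s) (hf' : HasFDerivWithinAt f f' s x) :
    f y - f x ≤ f' (y - x) := by
  set g : ℝ →ᵃ[ℝ] E := AffineMap.lineMap x y
  have hmaps : MapsTo g (Icc 0 1) s := hf.1.mapsTo_lineMap hx hy
  have hconc : ConcaveOn ℝ (Icc 0 1) (f ∘ g) :=
    (hf.comp_affineMap g).subset hmaps.subset_preimage (convex_Icc 0 1)
  have hderiv : HasDerivWithinAt (f ∘ g) (f' (y - x)) (Icc 0 1) 0 := by
    have hg0 : g 0 = x := AffineMap.lineMap_apply_zero x y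
    exact (hg0 ▸ hf').comp_hasDerivWithinAt 0 AffineMap.hasDerivWithinAt_lineMap hmaps
  have hslope := hconc.slope_le_of_hasDerivWithinAt (left_mem_Icc.2 zero_le_one)
    (right_mem_Icc.2 zero_le_one) zero_lt_one hderiv
  simpa [g, slope_def_field] using hslope

theorem ConcaveOn.sub_le_inner_of_hasGradientAt {E : Type*} [NormedAddCommGroup E]
    [InnerProductSpace ℝ E] [CompleteSpace E] {s : Set E} {f : E → ℝ} {f' x y : E}
    (hf : ConcaveOn ℝ s f) (hx : x ∈ s) (hy : y ∈ s) (hf' : HasGradientAt f f' x) :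
    f y - f x ≤ inner ℝ f' (y - x) :=
  hf.sub_le_of_hasFDerivWithinAt hx hy hf'.hasFDerivAt.hasFDerivWithinAt

theorem Fintype.sum_apply_update_sub {ι M : Type*} [Fintype ι] [DecidableEq ι]
    [AddCommMonoid M] {E : ι → Type*} [∀ i, AddGroup (E i)] (h : ∀ i, E i → M)
    (h_zero : ∀ i, h i 0 = 0) (a : ∀ i, E i) (n : ι) (y : E n) :
    ∑ i, h i (Function.update a n y i - a i) = h n (y - a n) := by
  rw [Fintype.sum_eq_single n fun i hi => by simp [Function.update_of_ne hi, h_zero]]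
  simp

theorem variational_equilibrium_is_gne_general
    {N : ℕ} (d : Fin N → ℕ)
    (C : Set ((n : Fin N) → EuclideanSpace ℝ (Fin (d n))))
    (φ : Fin N → ((n : Fin N) → EuclideanSpace ℝ (Fin (d n))) → ℝ)
    (hφdiff : ∀ n, ∀ a : (m : Fin N) → EuclideanSpace ℝ (Fin (d m)),
      Differentiable ℝ (fun y : EuclideanSpace ℝ (Fin (d n)) =>
        φ n (Function.update a n y)))
    (hφconc : ∀ n, ∀ a : (m : Fin N) → EuclideanSpace ℝ (Fin (d m)),
      ConcaveOn ℝ Set.univ (fun y : EuclideanSpace ℝ (Fin (d n)) =>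
        φ n (Function.update a n y)))
    (astar : (n : Fin N) → EuclideanSpace ℝ (Fin (d n)))
    (hvi : ∀ a ∈ C,
      ∑ n, (inner ℝ
        (gradient (fun y : EuclideanSpace ℝ (Fin (d n)) =>
          φ n (Function.update astar n y)) (astar n))
        (a n - astar n) : ℝ) ≤ 0) :
    ∀ n, ∀ y : EuclideanSpace ℝ (Fin (d n)),
      Function.update astar n y ∈ C →
        φ n (Function.update astar n y) ≤ φ n astar := by
  intro n y hy
  have hvi_n := hvi _ hy
  rw [Fintype.sum_apply_update_sub (fun _ v => inner ℝ _ v) (fun _ => inner_zero_right _)]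
    at hvi_n
  have htangent := (hφconc n astar).sub_le_inner_of_hasGradientAt (mem_univ (astar n))
    (mem_univ y) (hφdiff n astar (astar n)).hasGradientAt
  rw [Function.update_eq_self] at htangent
  linarith

/-- In a shared-constraint (jointly convex) generalized Nash equilibrium
problem where each player's payoff φ_n is C¹ and concave in its own variable, any
solution a* of the variational inequality for the pseudogradient
F(a) = (∇_{a_1}φ_1(a), …, ∇_{a_N}φ_N(a)) over the shared constraint set C is a
generalized Nash equilibrium. -/
theorem variational_equilibrium_is_gne
    {N : ℕ} (d : Fin N → ℕ)
    (C : Set ((n : Fin N) → EuclideanSpace ℝ (Fin (d n))))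
    (hCconv : Convex ℝ C) (hCcomp : IsCompact C)
    (φ : Fin N → ((n : Fin N) → EuclideanSpace ℝ (Fin (d n))) → ℝ)
    (hφcont : ∀ n, Continuous (φ n))
    (hφdiff : ∀ n, ∀ a : (m : Fin N) → EuclideanSpace ℝ (Fin (d m)),
      Differentiable ℝ (fun y : EuclideanSpace ℝ (Fin (d n)) =>
        φ n (Function.update a n y)))
    (hφconc : ∀ n, ∀ a : (m : Fin N) → EuclideanSpace ℝ (Fin (d m)),
      ConcaveOn ℝ Set.univ (fun y : EuclideanSpace ℝ (Fin (d n)) =>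
        φ n (Function.update a n y)))
    (astar : (n : Fin N) → EuclideanSpace ℝ (Fin (d n))) (hastar : astar ∈ C)
    (hvi : ∀ a ∈ C,
      ∑ n, (inner ℝ
        (gradient (fun y : EuclideanSpace ℝ (Fin (d n)) =>
          φ n (Function.update astar n y)) (astar n))
        (a n - astar n) : ℝ) ≤ 0) :
    ∀ n, ∀ y : EuclideanSpace ℝ (Fin (d n)),
      Function.update astar n y ∈ C →
        φ n (Function.update astar n y) ≤ φ n astar :=
  variational_equilibrium_is_gne_general d C φ hφdiff hφconc astar hvi
end
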